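/- arXiv:2401.14962 — 5 statements merged into one kernel-verified Lean document; each statement's English description precedes it below -/
import Mathlib

section
/- For any probability p in [0,1], any positive integer M, and any γ > 0, the inequality (1 - p)^M ≤ exp(-M p) ≤ exp(-M/γ) · min{1, γ p} + max{0, 1 - γ p} holds. -/
theorem stmt_0 (p : ℝ) (hp0 : 0 ≤ p) (hp1 : p ≤ 1)
    (M : ℕ) (hM : 0 < M) (γ : ℝ) (hγ : 0 < γ) :
    (1 - p) ^ M ≤ Real.exp (-(M * p)) ∧
      Real.exp (-(M * p)) ≤
        Real.exp (-(M / γ)) * min 1 (γ * p) + max 0 (1 - γ * p) := by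
  constructor
  · have h1 : (1 - p) ≤ Real.exp (-p) := by
      have := Real.add_one_le_exp (-p)
      linarith
    have h2 : (1 - p) ^ M ≤ (Real.exp (-p)) ^ M :=
      pow_le_pow_left₀ (by linarith) h1 M
    calc (1 - p) ^ M ≤ (Real.exp (-p)) ^ M := h2
      _ = Real.exp (-(M * p)) := by
          rw [← Real.exp_nat_mul]; ring_nf
  · rcases le_or_gt 1 (γ * p) with h | h
    · rw [min_eq_left h, max_eq_left (by linarith)]
      have : -(M * p) ≤ -(M / γ) := by
        rw [neg_le_neg_iff]
        rw [div_le_iff₀ hγ]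
        have : 1 ≤ p * γ := by linarith [mul_comm γ p]
        nlinarith [(Nat.cast_pos (α := ℝ)).mpr hM]
      calc Real.exp (-(M * p)) ≤ Real.exp (-(M / γ)) := Real.exp_le_exp.mpr this
        _ = Real.exp (-(M / γ)) * 1 + 0 := by ring
    · rw [min_eq_right h.le, max_eq_right (by linarith)]
      set t := γ * p with ht
      have ht0 : 0 ≤ t := mul_nonneg hγ.le hp0
      have key := convexOn_exp.2 (Set.mem_univ (-(M / γ))) (Set.mem_univ (0 : ℝ))
        ht0 (by linarith : (0:ℝ) ≤ 1 - t) (by ring)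
      simp only [smul_eq_mul, mul_zero, add_zero, Real.exp_zero, mul_one] at key
      have harg : t * -(M / γ) = -(M * p) := by
        field_simp [ht]
        ring
      rw [harg] at key
      linarith [key]
end

section
/- Let f be a concave function ℝ^r → ℝ, E ⊆ ℝ^r convex, x* a global maximizer of f with x* not in the closure of E, and let x₀ be a point of the closure of E minimizing the Euclidean distance to x*. If f is differentiable at x₀ and ∇f(x₀) ≠ 0, then ⟨∇f(x₀), x* − x₀⟩ > 0. -/
/-! Concavity gives the first-order bound `f x* ≤ f x₀ + ⟪∇f x₀, x* - x₀⟫`. If the inner product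
were nonpositive, `x₀` would be a global maximizer as well, forcing `∇f x₀ = 0`. -/

open RealInnerProductSpace Set

theorem ConcaveOn.le_add_of_hasFDerivAt {E : Type*} [NormedAddCommGroup E] [NormedSpace ℝ E]
    {f : E → ℝ} {f' : E →L[ℝ] ℝ} {x : E} (hf : ConcaveOn ℝ univ f) (hf' : HasFDerivAt f f' x)
    (y : E) : f y ≤ f x + f' (y - x) := by
  have hline : ConcaveOn ℝ univ (f ∘ AffineMap.lineMap (k := ℝ) x y) := hf.comp_affineMap _
  have hderiv : HasDerivAt (f ∘ AffineMap.lineMap (k := ℝ) x y) (f' (y - x)) 0 := by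
    have hf'₀ : HasFDerivAt f f' (AffineMap.lineMap x y (0 : ℝ)) := by simpa using hf'
    exact hf'₀.comp_hasDerivAt (0 : ℝ) AffineMap.hasDerivAt_lineMap
  have hslope := hline.slope_le_of_hasDerivAt (mem_univ 0) (mem_univ 1) zero_lt_one hderiv
  simp only [slope_def_field, Function.comp_apply, AffineMap.lineMap_apply_zero,
    AffineMap.lineMap_apply_one, sub_zero, div_one] at hslope
  linarith

theorem ConcaveOn.le_add_inner_gradient {E : Type*} [NormedAddCommGroup E]
    [InnerProductSpace ℝ E] [CompleteSpace E] {f : E → ℝ} {x : E} (hf : ConcaveOn ℝ univ f)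
    (hdiff : DifferentiableAt ℝ f x) (y : E) : f y ≤ f x + ⟪gradient f x, y - x⟫ := by
  simpa using hf.le_add_of_hasFDerivAt hdiff.hasFDerivAt y

theorem stmt_2_general {r : ℕ} (f : EuclideanSpace ℝ (Fin r) → ℝ)
    (hf : ConcaveOn ℝ Set.univ f)
    (xstar x₀ : EuclideanSpace ℝ (Fin r))
    (hmax : ∀ y, f y ≤ f xstar)
    (hdiff : DifferentiableAt ℝ f x₀)
    (hne : gradient f x₀ ≠ 0) :
    0 < ⟪gradient f x₀, xstar - x₀⟫ := by
  by_contra! h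
  have hx₀max : IsLocalMax f x₀ := Filter.Eventually.of_forall fun y =>
    (hmax y).trans (by linarith [hf.le_add_inner_gradient hdiff xstar])
  exact hne (by rw [gradient, hx₀max.fderiv_eq_zero, map_zero])

theorem stmt_2 {r : ℕ} (f : EuclideanSpace ℝ (Fin r) → ℝ)
    (hf : ConcaveOn ℝ Set.univ f)
    (E : Set (EuclideanSpace ℝ (Fin r))) (hE : Convex ℝ E)
    (xstar x₀ : EuclideanSpace ℝ (Fin r))
    (hmax : ∀ y, f y ≤ f xstar)
    (hnot : xstar ∉ closure E)
    (hx₀ : x₀ ∈ closure E)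
    (hmin : ∀ x ∈ closure E, ‖x₀ - xstar‖ ≤ ‖x - xstar‖)
    (hdiff : DifferentiableAt ℝ f x₀)
    (hne : gradient f x₀ ≠ 0) :
    0 < ⟪gradient f x₀, xstar - x₀⟫ :=
  stmt_2_general f hf xstar x₀ hmax hdiff hne
end

section
/- Let X, U, (Z,Y) be random variables such that X − U − (Z,Y) is a Markov chain, U takes values in {1,…,M}, and P_{U|X}(u|x) ≤ 1 for all (x,u). Let P_{X̄|Z̄Ȳ} be a conditional distribution such that dP_{X̄|Z̄=z,Ȳ=y}/dP_X exists. Then E[exp(ι(X;Z,Y))] ≤ M, where ι(x;z,y) = log (dP_{X̄|Z̄=z,Ȳ=y}/dP_X)(x). -/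
theorem stmt_11 {𝒳 𝒵𝒴 : Type*} [Fintype 𝒳] [Fintype 𝒵𝒴] (M : ℕ) (hM : 0 < M)
    (pX : 𝒳 → ℝ) (hpX0 : ∀ x, 0 ≤ pX x) (hpX1 : ∑ x, pX x = 1)
    (pU : 𝒳 → Fin M → ℝ) (hpU0 : ∀ x u, 0 ≤ pU x u) (hpU1 : ∀ x, ∑ u, pU x u = 1)
    (pZY : Fin M → 𝒵𝒴 → ℝ) (hpZY0 : ∀ u b, 0 ≤ pZY u b) (hpZY1 : ∀ u, ∑ b, pZY u b = 1)
    (K : 𝒵𝒴 → 𝒳 → ℝ) (hK0 : ∀ b x, 0 ≤ K b x) (hK1 : ∀ b, ∑ x, K b x = 1)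
    (hac : ∀ b x, pX x = 0 → K b x = 0) :
    ∑ x, ∑ u, ∑ b, pX x * pU x u * pZY u b * (K b x / pX x) ≤ M := by
  have hpUle : ∀ x u, pU x u ≤ 1 := by
    intro x u
    calc pU x u ≤ ∑ u', pU x u' := Finset.single_le_sum (fun u' _ => hpU0 x u') (Finset.mem_univ u)
    _ = 1 := hpU1 x
  have key : ∀ x u b, pX x * pU x u * pZY u b * (K b x / pX x) ≤ pZY u b * K b x := by
    intro x u b
    rcases eq_or_lt_of_le (hpX0 x) with h | h
    · rw [hac b x h.symm]
      simp
    · have : pX x * pU x u * pZY u b * (K b x / pX x)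
          = pU x u * (pZY u b * K b x) := by
        field_simp
      rw [this]
      calc pU x u * (pZY u b * K b x) ≤ 1 * (pZY u b * K b x) := by
            apply mul_le_mul_of_nonneg_right (hpUle x u)
            exact mul_nonneg (hpZY0 u b) (hK0 b x)
      _ = pZY u b * K b x := one_mul _
  calc ∑ x, ∑ u, ∑ b, pX x * pU x u * pZY u b * (K b x / pX x)
      ≤ ∑ x, ∑ u, ∑ b, pZY u b * K b x := by
        apply Finset.sum_le_sum; intro x _
        apply Finset.sum_le_sum; intro u _
        apply Finset.sum_le_sum; intro b _
        exact key x u b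
    _ = ∑ u : Fin M, ∑ b, pZY u b * (∑ x, K b x) := by
        rw [Finset.sum_comm]
        congr 1; ext u
        rw [Finset.sum_comm]
        congr 1; ext b
        rw [Finset.mul_sum]
    _ = ∑ u : Fin M, (1 : ℝ) := by
        congr 1; ext u
        simp only [hK1, mul_one, hpZY1]
    _ = M := by simp
end

section
/- Under the hypotheses of the previous statement (Markov chain X − U − (Z,Y), U ∈ {1,…,M}), for any γ ≥ 0 and any nonnegative function f(s,x,z,y) of the form f = ι(x;z,y) + sup_{λ_s ≥ 0} λ_s(d_s(s,z) − d_s) + sup_{λ_x ≥ 0} λ_x(d_x(x,y) − d_x) − log M, one has P[f(S,X,Z,Y) ≥ γ] ≤ ε + exp(−γ), where ε = P[d_s(S,Z) > d_s ∪ d_x(X,Y) > d_x]. -/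
private lemma sup_zero' (t : ℝ) (ht : t ≤ 0) :
    (⨆ l : {l : ℝ // 0 ≤ l}, ((l.1 * t : ℝ) : EReal)) = 0 := by
  apply le_antisymm
  · apply iSup_le
    intro l
    have : l.1 * t ≤ 0 := mul_nonpos_of_nonneg_of_nonpos l.2 ht
    exact_mod_cast EReal.coe_le_coe_iff.mpr this
  · have := le_iSup (fun l : {l : ℝ // 0 ≤ l} => ((l.1 * t : ℝ) : EReal)) ⟨0, le_rfl⟩
    simpa using this

theorem stmt_12 {𝒮 𝒳 𝒵 𝒴 : Type*} [Fintype 𝒮] [Fintype 𝒳] [Fintype 𝒵] [Fintype 𝒴]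
    (M : ℕ) (hM : 0 < M)
    (pSX : 𝒮 → 𝒳 → ℝ) (hpSX0 : ∀ s x, 0 ≤ pSX s x) (hpSX1 : ∑ s, ∑ x, pSX s x = 1)
    (pU : 𝒳 → Fin M → ℝ) (hpU0 : ∀ x u, 0 ≤ pU x u) (hpU1 : ∀ x, ∑ u, pU x u = 1)
    (pZY : Fin M → 𝒵 × 𝒴 → ℝ) (hpZY0 : ∀ u b, 0 ≤ pZY u b) (hpZY1 : ∀ u, ∑ b, pZY u b = 1)
    (K : 𝒵 × 𝒴 → 𝒳 → ℝ) (hK0 : ∀ b x, 0 ≤ K b x) (hK1 : ∀ b, ∑ x, K b x = 1)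
    (hac : ∀ b x, (∑ s, pSX s x) = 0 → K b x = 0)
    (ds : 𝒮 → 𝒵 → ℝ) (hds : ∀ s z, 0 ≤ ds s z)
    (dx : 𝒳 → 𝒴 → ℝ) (hdx : ∀ x y, 0 ≤ dx x y)
    (Ds Dx : ℝ) (hDs : 0 ≤ Ds) (hDx : 0 ≤ Dx) (γ : ℝ) (hγ : 0 ≤ γ) :
    -- joint law of (S, X, Z, Y) induced by the Markov chain X − U − (Z,Y)
    let J : 𝒮 → 𝒳 → 𝒵 × 𝒴 → ℝ := fun s x b => pSX s x * ∑ u, pU x u * pZY u b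
    -- the function f, with the suprema over λ ≥ 0 taken in the extended reals
    let f : 𝒮 → 𝒳 → 𝒵 × 𝒴 → EReal := fun s x b =>
      ((Real.log (K b x / ∑ s', pSX s' x) : ℝ) : EReal)
        + (⨆ l : {l : ℝ // 0 ≤ l}, ((l.1 * (ds s b.1 - Ds) : ℝ) : EReal))
        + (⨆ l : {l : ℝ // 0 ≤ l}, ((l.1 * (dx x b.2 - Dx) : ℝ) : EReal))
        - ((Real.log M : ℝ) : EReal)
    -- P[f(S,X,Z,Y) ≥ γ] ≤ ε + exp(−γ)
    (∑ s, ∑ x, ∑ b,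
        Set.indicator {q : 𝒮 × 𝒳 × 𝒵 × 𝒴 | (γ : EReal) ≤ f q.1 q.2.1 q.2.2}
          (fun _ => (1 : ℝ)) (s, x, b) * J s x b)
      ≤ (∑ s, ∑ x, ∑ b,
          Set.indicator {q : 𝒮 × 𝒳 × 𝒵 × 𝒴 | Ds < ds q.1 q.2.2.1 ∨ Dx < dx q.2.1 q.2.2.2}
            (fun _ => (1 : ℝ)) (s, x, b) * J s x b)
        + Real.exp (-γ) := by
  intro J f
  -- basic facts
  have hJ0 : ∀ s x b, 0 ≤ J s x b := fun s x b =>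
    mul_nonneg (hpSX0 s x) (Finset.sum_nonneg fun u _ =>
      mul_nonneg (hpU0 x u) (hpZY0 u b))
  have hIA01 : ∀ (A : Set (𝒮 × 𝒳 × 𝒵 × 𝒴)) q,
      Set.indicator A (fun _ => (1:ℝ)) q = 0 ∨ Set.indicator A (fun _ => (1:ℝ)) q = 1 := by
    intro A q
    by_cases h : q ∈ A
    · right; simp [h]
    · left; simp [h]
  have hI01 : ∀ (A : Set (𝒮 × 𝒳 × 𝒵 × 𝒴)) q,
      0 ≤ Set.indicator A (fun _ => (1:ℝ)) q ∧ Set.indicator A (fun _ => (1:ℝ)) q ≤ 1 := by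
    intro A q
    rcases hIA01 A q with h | h <;> rw [h] <;> norm_num
  have hJsum : (∑ s, ∑ x, ∑ b, J s x b) = 1 := by
    have hq : ∀ x, (∑ b, ∑ u, pU x u * pZY u b) = 1 := by
      intro x
      rw [Finset.sum_comm]
      simp only [← Finset.mul_sum, hpZY1, mul_one]
      exact hpU1 x
    calc (∑ s, ∑ x, ∑ b, J s x b) = ∑ s, ∑ x, pSX s x := by
          apply Finset.sum_congr rfl; intro s _
          apply Finset.sum_congr rfl; intro x _
          show (∑ b, pSX s x * ∑ u, pU x u * pZY u b) = _
          rw [← Finset.mul_sum, hq x, mul_one]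
      _ = 1 := hpSX1
  rcases eq_or_lt_of_le hγ with hγ0 | hγpos
  · -- γ = 0 : trivial since total mass is 1
    have h1 : (∑ s, ∑ x, ∑ b,
        Set.indicator {q : 𝒮 × 𝒳 × 𝒵 × 𝒴 | (γ : EReal) ≤ f q.1 q.2.1 q.2.2}
          (fun _ => (1 : ℝ)) (s, x, b) * J s x b) ≤ 1 := by
      have hle : (∑ s, ∑ x, ∑ b,
          Set.indicator {q : 𝒮 × 𝒳 × 𝒵 × 𝒴 | (γ : EReal) ≤ f q.1 q.2.1 q.2.2}
            (fun _ => (1 : ℝ)) (s, x, b) * J s x b) ≤ ∑ s, ∑ x, ∑ b, J s x b := by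
        refine Finset.sum_le_sum fun s _ => Finset.sum_le_sum fun x _ =>
          Finset.sum_le_sum fun b _ => ?_
        exact mul_le_of_le_one_left (hJ0 s x b)
          (hI01 {q : 𝒮 × 𝒳 × 𝒵 × 𝒴 | (γ : EReal) ≤ f q.1 q.2.1 q.2.2} (s, x, b)).2
      exact hle.trans_eq hJsum
    have h2 : (1:ℝ) ≤ (∑ s, ∑ x, ∑ b,
          Set.indicator {q : 𝒮 × 𝒳 × 𝒵 × 𝒴 | Ds < ds q.1 q.2.2.1 ∨ Dx < dx q.2.1 q.2.2.2}
            (fun _ => (1 : ℝ)) (s, x, b) * J s x b) + Real.exp (-γ) := by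
      have : Real.exp (-γ) = 1 := by rw [← hγ0]; simp
      rw [this]
      have : (0:ℝ) ≤ ∑ s, ∑ x, ∑ b,
          Set.indicator {q : 𝒮 × 𝒳 × 𝒵 × 𝒴 | Ds < ds q.1 q.2.2.1 ∨ Dx < dx q.2.1 q.2.2.2}
            (fun _ => (1 : ℝ)) (s, x, b) * J s x b :=
        Finset.sum_nonneg fun s _ => Finset.sum_nonneg fun x _ =>
          Finset.sum_nonneg fun b _ => mul_nonneg (hI01 _ _).1 (hJ0 s x b)
      linarith
    exact h1.trans h2
  · -- main case γ > 0
    set g : 𝒮 → 𝒳 → 𝒵 × 𝒴 → ℝ := fun s x b =>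
      if (∑ s', pSX s' x) * M * Real.exp γ ≤ K b x then J s x b else 0 with hg
    have hg0 : ∀ s x b, 0 ≤ g s x b := by
      intro s x b
      by_cases h : (∑ s', pSX s' x) * M * Real.exp γ ≤ K b x <;> simp [hg, h, hJ0]
    -- pointwise bound
    have hpt : ∀ s x b,
        Set.indicator {q : 𝒮 × 𝒳 × 𝒵 × 𝒴 | (γ : EReal) ≤ f q.1 q.2.1 q.2.2}
          (fun _ => (1 : ℝ)) (s, x, b) * J s x b
        ≤ Set.indicator {q : 𝒮 × 𝒳 × 𝒵 × 𝒴 | Ds < ds q.1 q.2.2.1 ∨ Dx < dx q.2.1 q.2.2.2}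
            (fun _ => (1 : ℝ)) (s, x, b) * J s x b + g s x b := by
      intro s x b
      by_cases hB : Ds < ds s b.1 ∨ Dx < dx x b.2
      · have : Set.indicator {q : 𝒮 × 𝒳 × 𝒵 × 𝒴 | Ds < ds q.1 q.2.2.1 ∨ Dx < dx q.2.1 q.2.2.2}
            (fun _ => (1 : ℝ)) (s, x, b) = 1 := by
          apply Set.indicator_of_mem; exact hB
        rw [this, one_mul]
        have := mul_le_of_le_one_left (hJ0 s x b) (hI01 {q : 𝒮 × 𝒳 × 𝒵 × 𝒴 | (γ : EReal) ≤ f q.1 q.2.1 q.2.2} (s, x, b)).2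
        linarith [hg0 s x b]
      · have hBval : Set.indicator {q : 𝒮 × 𝒳 × 𝒵 × 𝒴 | Ds < ds q.1 q.2.2.1 ∨ Dx < dx q.2.1 q.2.2.2}
            (fun _ => (1 : ℝ)) (s, x, b) = 0 := by
          apply Set.indicator_of_notMem; exact hB
        rw [hBval, zero_mul, zero_add]
        push_neg at hB
        obtain ⟨hB1, hB2⟩ := hB
        by_cases hA : (γ : EReal) ≤ f s x b
        · -- on this event, g = J
          have hAval : Set.indicator {q : 𝒮 × 𝒳 × 𝒵 × 𝒴 | (γ : EReal) ≤ f q.1 q.2.1 q.2.2}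
              (fun _ => (1 : ℝ)) (s, x, b) = 1 := by
            apply Set.indicator_of_mem; exact hA
          rw [hAval, one_mul]
          by_cases hpx : (∑ s', pSX s' x) = 0
          · -- J = 0
            have : pSX s x = 0 := by
              have := (Finset.sum_eq_zero_iff_of_nonneg (fun s' _ => hpSX0 s' x)).mp hpx
              exact this s (Finset.mem_univ s)
            have : J s x b = 0 := by simp [J, this]
            rw [this]; exact hg0 s x b
          · have hpxpos : 0 < ∑ s', pSX s' x :=
              lt_of_le_of_ne (Finset.sum_nonneg fun s' _ => hpSX0 s' x) (Ne.symm hpx)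
            -- evaluate f
            have hsup1 : (⨆ l : {l : ℝ // 0 ≤ l}, ((l.1 * (ds s b.1 - Ds) : ℝ) : EReal)) = 0 :=
              sup_zero' _ (by linarith)
            have hsup2 : (⨆ l : {l : ℝ // 0 ≤ l}, ((l.1 * (dx x b.2 - Dx) : ℝ) : EReal)) = 0 :=
              sup_zero' _ (by linarith)
            have hfval0 : f s x b =
                ((Real.log (K b x / ∑ s', pSX s' x) : ℝ) : EReal)
                  + (⨆ l : {l : ℝ // 0 ≤ l}, ((l.1 * (ds s b.1 - Ds) : ℝ) : EReal))
                  + (⨆ l : {l : ℝ // 0 ≤ l}, ((l.1 * (dx x b.2 - Dx) : ℝ) : EReal))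
                  - ((Real.log M : ℝ) : EReal) := rfl
            have hfval : f s x b =
                ((Real.log (K b x / ∑ s', pSX s' x) - Real.log M : ℝ) : EReal) := by
              rw [hfval0, hsup1, hsup2, add_zero, add_zero, ← EReal.coe_sub]
            rw [hfval] at hA
            have hA' : γ ≤ Real.log (K b x / ∑ s', pSX s' x) - Real.log M :=
              EReal.coe_le_coe_iff.mp hA
            have hlogM : 0 ≤ Real.log M := by
              have : (1:ℝ) ≤ M := by exact_mod_cast hM
              exact Real.log_nonneg this
            have hratio : 0 < Real.log (K b x / ∑ s', pSX s' x) := by linarith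
            have hKpos : 1 < K b x / ∑ s', pSX s' x := by
              by_contra h
              push_neg at h
              have := Real.log_nonpos (div_nonneg (hK0 b x) hpxpos.le) h
              linarith
            have hexp : M * Real.exp γ ≤ K b x / ∑ s', pSX s' x := by
              have h1 : Real.log M + γ ≤ Real.log (K b x / ∑ s', pSX s' x) := by linarith
              have h2 := Real.exp_le_exp.mpr h1
              rw [Real.exp_add, Real.exp_log (by exact_mod_cast hM : (0:ℝ) < M)] at h2
              calc M * Real.exp γ ≤ Real.exp (Real.log (K b x / ∑ s', pSX s' x)) := h2
                _ ≤ K b x / ∑ s', pSX s' x := by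
                    rw [Real.exp_log (by linarith : (0:ℝ) < K b x / ∑ s', pSX s' x)]
            have hcond : (∑ s', pSX s' x) * M * Real.exp γ ≤ K b x := by
              rw [mul_assoc]
              calc (∑ s', pSX s' x) * (M * Real.exp γ)
                  ≤ (∑ s', pSX s' x) * (K b x / ∑ s', pSX s' x) :=
                    mul_le_mul_of_nonneg_left hexp hpxpos.le
                _ = K b x := by field_simp
            have : g s x b = J s x b := by simp [hg, hcond]
            rw [this]
        · have hAval : Set.indicator {q : 𝒮 × 𝒳 × 𝒵 × 𝒴 | (γ : EReal) ≤ f q.1 q.2.1 q.2.2}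
              (fun _ => (1 : ℝ)) (s, x, b) = 0 := by
            apply Set.indicator_of_notMem; exact hA
          rw [hAval, zero_mul]
          exact hg0 s x b
    -- sum of g bound
    have hgsum : (∑ s, ∑ x, ∑ b, g s x b) ≤ Real.exp (-γ) := by
      have key : ∀ x b, (∑ s, g s x b)
          ≤ Real.exp (-γ) / M * (K b x * ∑ u, pU x u * pZY u b) := by
        intro x b
        have hsg : (∑ s, g s x b) =
            if (∑ s', pSX s' x) * M * Real.exp γ ≤ K b x
            then (∑ s', pSX s' x) * ∑ u, pU x u * pZY u b else 0 := by
          by_cases h : (∑ s', pSX s' x) * M * Real.exp γ ≤ K b x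
          · simp only [hg, h, if_true]
            rw [← Finset.sum_mul]
          · simp [hg, h]
        rw [hsg]
        have hq0 : 0 ≤ ∑ u, pU x u * pZY u b :=
          Finset.sum_nonneg fun u _ => mul_nonneg (hpU0 x u) (hpZY0 u b)
        by_cases h : (∑ s', pSX s' x) * M * Real.exp γ ≤ K b x
        · rw [if_pos h]
          have hMe : (0:ℝ) < (M:ℝ) * Real.exp γ := by positivity
          have hM0 : ((M:ℝ)) ≠ 0 := Nat.cast_ne_zero.mpr hM.ne'
          have heq : Real.exp (-γ) / M * K b x = K b x / ((M:ℝ) * Real.exp γ) := by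
            rw [Real.exp_neg, eq_div_iff (by positivity)]
            field_simp
          have hpx : (∑ s', pSX s' x) ≤ Real.exp (-γ) / M * K b x := by
            rw [heq, le_div_iff₀ hMe, ← mul_assoc]
            exact h
          calc (∑ s', pSX s' x) * ∑ u, pU x u * pZY u b
              ≤ (Real.exp (-γ) / M * K b x) * ∑ u, pU x u * pZY u b :=
                mul_le_mul_of_nonneg_right hpx hq0
            _ = Real.exp (-γ) / M * (K b x * ∑ u, pU x u * pZY u b) := by ring
        · rw [if_neg h]
          exact mul_nonneg (by positivity) (mul_nonneg (hK0 b x) hq0)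
      calc (∑ s, ∑ x, ∑ b, g s x b) = ∑ x, ∑ b, ∑ s, g s x b := by
            rw [Finset.sum_comm]
            exact Finset.sum_congr rfl fun x _ => Finset.sum_comm
        _ ≤ ∑ x, ∑ b, Real.exp (-γ) / M * (K b x * ∑ u, pU x u * pZY u b) :=
            Finset.sum_le_sum fun x _ => Finset.sum_le_sum fun b _ => key x b
        _ = Real.exp (-γ) / M * ∑ x, ∑ b, K b x * ∑ u, pU x u * pZY u b := by
            rw [Finset.mul_sum]
            exact Finset.sum_congr rfl fun x _ => (Finset.mul_sum _ _ _).symm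
        _ ≤ Real.exp (-γ) / M * M := by
            apply mul_le_mul_of_nonneg_left _ (by positivity)
            calc (∑ x, ∑ b, K b x * ∑ u, pU x u * pZY u b)
                = ∑ x, ∑ b, ∑ u, K b x * (pU x u * pZY u b) := by
                  simp only [Finset.mul_sum]
              _ = ∑ b, ∑ x, ∑ u, K b x * (pU x u * pZY u b) := Finset.sum_comm
              _ = ∑ b, ∑ u, ∑ x, K b x * (pU x u * pZY u b) :=
                  Finset.sum_congr rfl fun b _ => Finset.sum_comm
              _ = ∑ u, ∑ b, ∑ x, K b x * (pU x u * pZY u b) := Finset.sum_comm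
              _ = ∑ u, ∑ b, pZY u b * ∑ x, K b x * pU x u := by
                  refine Finset.sum_congr rfl fun u _ => Finset.sum_congr rfl fun b _ => ?_
                  rw [Finset.mul_sum]
                  exact Finset.sum_congr rfl fun x _ => by ring
              _ ≤ ∑ u : Fin M, ∑ b, pZY u b * 1 := by
                  apply Finset.sum_le_sum; intro u _
                  apply Finset.sum_le_sum; intro b _
                  apply mul_le_mul_of_nonneg_left _ (hpZY0 u b)
                  calc (∑ x, K b x * pU x u) ≤ ∑ x, K b x := by
                        apply Finset.sum_le_sum; intro x _
                        have hpUle : pU x u ≤ 1 := by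
                          have := Finset.single_le_sum (f := fun u => pU x u)
                            (fun u _ => hpU0 x u) (Finset.mem_univ u)
                          rw [hpU1 x] at this
                          exact this
                        calc K b x * pU x u ≤ K b x * 1 :=
                              mul_le_mul_of_nonneg_left hpUle (hK0 b x)
                          _ = K b x := mul_one _
                    _ = 1 := hK1 b
              _ = M := by simp [hpZY1]
        _ = Real.exp (-γ) := by
            field_simp
    calc (∑ s, ∑ x, ∑ b,
        Set.indicator {q : 𝒮 × 𝒳 × 𝒵 × 𝒴 | (γ : EReal) ≤ f q.1 q.2.1 q.2.2}
          (fun _ => (1 : ℝ)) (s, x, b) * J s x b)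
        ≤ ∑ s, ∑ x, ∑ b,
          (Set.indicator {q : 𝒮 × 𝒳 × 𝒵 × 𝒴 | Ds < ds q.1 q.2.2.1 ∨ Dx < dx q.2.1 q.2.2.2}
            (fun _ => (1 : ℝ)) (s, x, b) * J s x b + g s x b) :=
          Finset.sum_le_sum fun s _ => Finset.sum_le_sum fun x _ =>
            Finset.sum_le_sum fun b _ => hpt s x b
      _ = (∑ s, ∑ x, ∑ b,
          Set.indicator {q : 𝒮 × 𝒳 × 𝒵 × 𝒴 | Ds < ds q.1 q.2.2.1 ∨ Dx < dx q.2.1 q.2.2.2}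
            (fun _ => (1 : ℝ)) (s, x, b) * J s x b) + ∑ s, ∑ x, ∑ b, g s x b := by
          simp [Finset.sum_add_distrib]
      _ ≤ _ := by linarith
end

section
/- For the erased-fair-coin-flips source with erasure rate δ ∈ (0, 1/3), Hamming distortions, and distortion pair (d_s, d_x) in region D₂ = {(d_s,d_x): 2δ ≤ d_x ≤ 1/2 + δ/2, d_s ≥ d_x − δ/2}, the rate-distortion function equals R(d_s,d_x) = (1 − δ)[log 2 − h((d_x − δ)/(1 − δ))], where h is the binary entropy function. -/
/-- Binary entropy function (natural log). -/
noncomputable def binH (p : ℝ) : ℝ := -(p * Real.log p) - (1 - p) * Real.log (1 - p)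

/-- Distribution of the observable source `X ∈ {0, 1, e}` (with `e` encoded as `2`)
obtained by passing a fair bit through a binary erasure channel with erasure rate `δ`. -/
noncomputable def pXefcf (δ : ℝ) : Fin 3 → ℝ := fun x => if x = 2 then δ else (1 - δ) / 2

/-- Conditional expected Hamming distortion `d̄ₛ(x, z) = E[1{S ≠ z} | X = x]`. -/
noncomputable def dbarS (x : Fin 3) (z : Fin 2) : ℝ :=
  if x = 2 then 1 / 2 else if (x : ℕ) = (z : ℕ) then 0 else 1

/-- Hamming distortion for the observable source. -/
noncomputable def dXefcf (x y : Fin 3) : ℝ := if x = y then 0 else 1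

/-- Mutual information `I(X; Z, Y)` induced by the test channel `W = P_{ZY|X}`. -/
noncomputable def mutInfo (δ : ℝ) (W : Fin 3 → Fin 2 × Fin 3 → ℝ) : ℝ :=
  ∑ x, ∑ b, pXefcf δ x * W x b * Real.log (W x b / ∑ x', pXefcf δ x' * W x' b)


noncomputable def Wopt (a : ℝ) : Fin 3 → Fin 2 × Fin 3 → ℝ := fun x b =>
  if b = ((0 : Fin 2), (0 : Fin 3)) then (if x = 0 then 1 - a else if x = 1 then a else 1/2)
  else if b = ((1 : Fin 2), (1 : Fin 3)) then (if x = 0 then a else if x = 1 then 1 - a else 1/2)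
  else 0

lemma Wopt_nonneg (a : ℝ) (ha : 0 ≤ a) (ha2 : a ≤ 1/2) : ∀ x b, 0 ≤ Wopt a x b := by
  intro x b
  unfold Wopt
  split_ifs <;> linarith

lemma Wopt_rowsum (a : ℝ) : ∀ x, ∑ b, Wopt a x b = 1 := by
  intro x
  fin_cases x <;>
    simp (config := { decide := true }) only [Wopt, Fintype.sum_prod_type, Fin.sum_univ_two,
      Fin.sum_univ_three, Prod.mk.injEq, if_true, if_false, and_true, and_false, true_and,
      false_and, and_self] <;> ring

lemma Wopt_ds (δ a : ℝ) :
    (∑ x, ∑ b, pXefcf δ x * Wopt a x b * dbarS x b.1) = (1 - δ) * a + δ / 2 := by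
  simp (config := { decide := true }) only [Wopt, pXefcf, dbarS, Fintype.sum_prod_type,
    Fin.sum_univ_two, Fin.sum_univ_three, Prod.mk.injEq, if_true, if_false, and_true, and_false,
    true_and, false_and, and_self]
  ring

lemma Wopt_dx (δ a : ℝ) :
    (∑ x, ∑ b, pXefcf δ x * Wopt a x b * dXefcf x b.2) = (1 - δ) * a + δ := by
  simp (config := { decide := true }) only [Wopt, pXefcf, dXefcf, Fintype.sum_prod_type,
    Fin.sum_univ_two, Fin.sum_univ_three, Prod.mk.injEq, if_true, if_false, and_true, and_false,
    true_and, false_and, and_self]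
  ring

lemma Wopt_marg (δ a : ℝ) (b : Fin 2 × Fin 3) :
    (∑ x', pXefcf δ x' * Wopt a x' b) =
      if b = ((0 : Fin 2), (0 : Fin 3)) ∨ b = ((1 : Fin 2), (1 : Fin 3)) then 1/2 else 0 := by
  obtain ⟨z, y⟩ := b
  fin_cases z <;> fin_cases y <;>
    simp (config := { decide := true }) only [Wopt, pXefcf, Fin.sum_univ_three, Prod.mk.injEq,
      if_true, if_false, and_true, and_false, true_and, false_and, and_self, or_self,
      true_or, or_true, false_or, or_false] <;> ring

lemma mutInfo_Wopt (δ a : ℝ) (hδ0 : 0 < δ) (hδ1 : δ < 1) (ha : 0 < a) (ha2 : a ≤ 1/2) :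
    mutInfo δ (Wopt a) = (1 - δ) * (Real.log 2 - binH a) := by
  have h1a : (0:ℝ) < 1 - a := by linarith
  have l1 : Real.log ((1 - a) / (1/2)) = Real.log 2 + Real.log (1 - a) := by
    rw [show (1 - a) / (1/2 : ℝ) = 2 * (1 - a) by ring, Real.log_mul two_ne_zero h1a.ne']
  have l2 : Real.log (a / (1/2)) = Real.log 2 + Real.log a := by
    rw [show a / (1/2 : ℝ) = 2 * a by ring, Real.log_mul two_ne_zero ha.ne']
  unfold mutInfo
  simp only [Wopt_marg δ a]
  simp (config := { decide := true }) only [Wopt, pXefcf, Fintype.sum_prod_type,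
    Fin.sum_univ_two, Fin.sum_univ_three, Prod.mk.injEq, if_true, if_false, and_true, and_false,
    true_and, false_and, and_self, or_self, true_or, or_true, false_or, or_false,
    mul_zero, zero_mul, add_zero, zero_add]
  norm_num [l1, l2, binH]
  ring

/-- Dual multiplier function for the converse. -/
noncomputable def alphaD (a : ℝ) : Fin 3 → ℝ := fun x => if x = 2 then (1 - a) / a else 2 * (1 - a)

/-- `c x b = α(x) e^{-λ d(x, b.2)}`. -/
noncomputable def cD (a : ℝ) : Fin 3 → Fin 2 × Fin 3 → ℝ := fun x b =>
  alphaD a x * (if x = b.2 then 1 else a / (1 - a))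

lemma converse (δ a dx : ℝ) (hδ0 : 0 < δ) (hδ1 : δ < 1) (ha : 0 < a) (ha2 : a ≤ 1/2)
    (haδ : δ ≤ (1 - δ) * a) (hdx : dx = (1 - δ) * a + δ)
    (W : Fin 3 → Fin 2 × Fin 3 → ℝ) (hW0 : ∀ x b, 0 ≤ W x b) (hW1 : ∀ x, ∑ b, W x b = 1)
    (hdxc : (∑ x, ∑ b, pXefcf δ x * W x b * dXefcf x b.2) ≤ dx) :
    (1 - δ) * (Real.log 2 - binH a) ≤ mutInfo δ W := by
  have h1a : (0:ℝ) < 1 - a := by linarith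
  have hp : ∀ x, 0 < pXefcf δ x := by
    intro x; unfold pXefcf; split <;> linarith
  set q : Fin 2 × Fin 3 → ℝ := fun b => ∑ x, pXefcf δ x * W x b with hq
  have hq0 : ∀ b, 0 ≤ q b := fun b =>
    Finset.sum_nonneg fun i _ => mul_nonneg (hp i).le (hW0 i b)
  have hα : ∀ x, 0 < alphaD a x := by
    intro x; unfold alphaD; split
    · positivity
    · linarith
  have hc : ∀ x b, 0 < cD a x b := by
    intro x b; unfold cD; have := hα x; split
    · linarith
    · positivity
  set lam : ℝ := Real.log ((1 - a) / a) with hlam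
  have hlam0 : 0 ≤ lam := Real.log_nonneg (by rw [le_div_iff₀ ha]; linarith)
  -- column constraints
  have hcol : ∀ b : Fin 2 × Fin 3, ∑ x, pXefcf δ x * cD a x b ≤ 1 := by
    intro b
    obtain ⟨z, y⟩ := b
    fin_cases y <;>
      simp (config := { decide := true }) only [cD, alphaD, pXefcf, Fin.sum_univ_three,
        if_true, if_false, mul_one]
    · exact le_of_eq (by field_simp; ring)
    · exact le_of_eq (by field_simp; ring)
    · have e1 : 2 * (1 - a) * (a / (1 - a)) = 2 * a := by field_simp
      have ht : a * ((1 - a) / a) = 1 - a := by field_simp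
      rw [e1]
      nlinarith [mul_nonneg (sub_nonneg.2 haδ) (sub_nonneg.2 ha2), ht, ha, hδ0]
  -- per-term inequality
  have key : ∀ x b, pXefcf δ x * W x b * Real.log (cD a x b) + pXefcf δ x * W x b
      - pXefcf δ x * q b * cD a x b ≤ pXefcf δ x * W x b * Real.log (W x b / q b) := by
    intro x b
    rcases eq_or_lt_of_le (hW0 x b) with h | h
    · rw [← h]
      have h1 := mul_nonneg (mul_nonneg (hp x).le (hq0 b)) (hc x b).le
      simp
      linarith
    · have hqb : 0 < q b := by
        refine lt_of_lt_of_le (mul_pos (hp x) h) ?_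
        exact Finset.single_le_sum (f := fun x' => pXefcf δ x' * W x' b)
          (fun i _ => mul_nonneg (hp i).le (hW0 i b)) (Finset.mem_univ x)
      have hcb := hc x b
      have ht : (0:ℝ) < q b * cD a x b / W x b := by positivity
      have hlog := Real.log_le_sub_one_of_pos ht
      have hlw : Real.log (W x b / q b) =
          Real.log (cD a x b) - Real.log (q b * cD a x b / W x b) := by
        rw [Real.log_div h.ne' hqb.ne', Real.log_div (mul_pos hqb hcb).ne' h.ne',
          Real.log_mul hqb.ne' hcb.ne']
        ring
      rw [hlw]
      have h1 : pXefcf δ x * W x b * Real.log (q b * cD a x b / W x b)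
          ≤ pXefcf δ x * W x b * (q b * cD a x b / W x b - 1) :=
        mul_le_mul_of_nonneg_left hlog (mul_nonneg (hp x).le h.le)
      have h2 : pXefcf δ x * W x b * (q b * cD a x b / W x b - 1)
          = pXefcf δ x * q b * cD a x b - pXefcf δ x * W x b := by
        field_simp
      nlinarith [h1, h2]
  -- sum the per-term inequality
  have sum_ge : ∑ x, ∑ b, (pXefcf δ x * W x b * Real.log (cD a x b) + pXefcf δ x * W x b
      - pXefcf δ x * q b * cD a x b) ≤ mutInfo δ W := by
    unfold mutInfo
    exact Finset.sum_le_sum fun x _ => Finset.sum_le_sum fun b _ => key x b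
  have split : ∑ x, ∑ b, (pXefcf δ x * W x b * Real.log (cD a x b) + pXefcf δ x * W x b
      - pXefcf δ x * q b * cD a x b)
      = (∑ x, ∑ b, pXefcf δ x * W x b * Real.log (cD a x b))
        + (∑ x, ∑ b, pXefcf δ x * W x b) - ∑ x, ∑ b, pXefcf δ x * q b * cD a x b := by
    rw [← Finset.sum_add_distrib, ← Finset.sum_sub_distrib]
    exact Finset.sum_congr rfl fun x _ => by
      rw [← Finset.sum_add_distrib, ← Finset.sum_sub_distrib]
  -- S2 = 1
  have hrow : ∀ x, ∑ b, pXefcf δ x * W x b = pXefcf δ x := fun x => by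
    rw [← Finset.mul_sum, hW1, mul_one]
  have hpsum : ∑ x, pXefcf δ x = 1 := by
    simp (config := { decide := true }) [pXefcf, Fin.sum_univ_three]
  have hS2 : ∑ x, ∑ b, pXefcf δ x * W x b = 1 := by
    simp only [hrow]; exact hpsum
  -- S3 ≤ 1
  have hqsum : ∑ b, q b = 1 := by
    rw [hq]
    rw [Finset.sum_comm]
    simp only [hrow]
    exact hpsum
  have hS3 : ∑ x, ∑ b, pXefcf δ x * q b * cD a x b ≤ 1 := by
    rw [Finset.sum_comm]
    calc ∑ b, ∑ x, pXefcf δ x * q b * cD a x b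
        = ∑ b, q b * ∑ x, pXefcf δ x * cD a x b := by
          refine Finset.sum_congr rfl fun b _ => ?_
          rw [Finset.mul_sum]
          exact Finset.sum_congr rfl fun x _ => by ring
      _ ≤ ∑ b, q b * 1 := Finset.sum_le_sum fun b _ =>
          mul_le_mul_of_nonneg_left (hcol b) (hq0 b)
      _ = 1 := by simp only [mul_one]; exact hqsum
  -- S1 evaluation
  have hlogc : ∀ x b, Real.log (cD a x b) = Real.log (alphaD a x) - lam * dXefcf x b.2 := by
    intro x b
    by_cases hxy : x = b.2
    · simp [cD, dXefcf, hxy]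
    · simp only [cD, dXefcf, if_neg hxy]
      rw [Real.log_mul (hα x).ne' (by positivity), hlam,
        Real.log_div h1a.ne' ha.ne', Real.log_div ha.ne' h1a.ne']
      ring
  have hS1 : ∑ x, ∑ b, pXefcf δ x * W x b * Real.log (cD a x b)
      = (∑ x, pXefcf δ x * Real.log (alphaD a x))
        - lam * ∑ x, ∑ b, pXefcf δ x * W x b * dXefcf x b.2 := by
    have hx : ∀ x, ∑ b, pXefcf δ x * W x b * Real.log (cD a x b)
        = pXefcf δ x * Real.log (alphaD a x)
          - lam * ∑ b, pXefcf δ x * W x b * dXefcf x b.2 := by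
      intro x
      have e : ∀ b : Fin 2 × Fin 3, pXefcf δ x * W x b * Real.log (cD a x b)
          = Real.log (alphaD a x) * (pXefcf δ x * W x b)
            - lam * (pXefcf δ x * W x b * dXefcf x b.2) := fun b => by rw [hlogc x b]; ring
      rw [Finset.sum_congr rfl fun b _ => e b, Finset.sum_sub_distrib]
      simp only [← Finset.mul_sum]
      rw [hW1]
      ring
    rw [Finset.sum_congr rfl fun x _ => hx x, Finset.sum_sub_distrib, ← Finset.mul_sum]
  -- value of the dual objective
  have hαs : ∑ x, pXefcf δ x * Real.log (alphaD a x)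
      = (1 - δ) * Real.log (2 * (1 - a)) + δ * lam := by
    rw [hlam]
    simp (config := { decide := true }) only [alphaD, pXefcf, Fin.sum_univ_three,
      if_true, if_false]
    ring
  have hlamd : lam * (∑ x, ∑ b, pXefcf δ x * W x b * dXefcf x b.2) ≤ lam * dx :=
    mul_le_mul_of_nonneg_left hdxc hlam0
  have hid : (1 - δ) * Real.log (2 * (1 - a)) + δ * lam - lam * dx
      = (1 - δ) * (Real.log 2 - binH a) := by
    rw [hdx, hlam, Real.log_mul two_ne_zero h1a.ne', Real.log_div h1a.ne' ha.ne']
    unfold binH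
    ring
  linarith [sum_ge, split, hS1, hS2, hS3, hlamd, hαs, hid]

theorem stmt_13 (δ ds dx : ℝ) (hδ0 : 0 < δ) (hδ1 : δ < 1 / 3)
    (hd1 : 2 * δ ≤ dx) (hd2 : dx ≤ 1 / 2 + δ / 2) (hd3 : ds ≥ dx - δ / 2) :
    IsLeast
      {I : ℝ | ∃ W : Fin 3 → Fin 2 × Fin 3 → ℝ,
        (∀ x b, 0 ≤ W x b) ∧ (∀ x, ∑ b, W x b = 1) ∧
        (∑ x, ∑ b, pXefcf δ x * W x b * dbarS x b.1) ≤ ds ∧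
        (∑ x, ∑ b, pXefcf δ x * W x b * dXefcf x b.2) ≤ dx ∧
        I = mutInfo δ W}
      ((1 - δ) * (Real.log 2 - binH ((dx - δ) / (1 - δ)))) := by
  have h1δ : (0:ℝ) < 1 - δ := by linarith
  set a : ℝ := (dx - δ) / (1 - δ) with ha_def
  have hA : (1 - δ) * a = dx - δ := by
    rw [ha_def]; field_simp
  have ha : 0 < a := div_pos (by linarith) h1δ
  have ha2 : a ≤ 1 / 2 := by
    rw [ha_def, div_le_iff₀ h1δ]; linarith
  constructor
  · exact ⟨Wopt a, Wopt_nonneg a ha.le ha2, Wopt_rowsum a,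
      by rw [Wopt_ds]; linarith,
      by rw [Wopt_dx]; linarith,
      (mutInfo_Wopt δ a hδ0 (by linarith) ha ha2).symm⟩
  · rintro I ⟨W, h0, h1, -, hdxc, rfl⟩
    exact converse δ a dx hδ0 (by linarith) ha ha2 (by linarith) (by linarith) W h0 h1 hdxc
end
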